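/- arXiv:2507.17921 — 2 statements merged into one kernel-verified Lean document; each statement's English description precedes it below -/
import Mathlib

section
/- Let w ≥ 1, let u ∈ ℝ^w with ‖u‖₂ = 1, let σ > 0, and let d ∈ ℝ^w with ‖d‖₂ < σ. Define σ̂ = ‖σ·u + d‖₂ (so σ̂ ≥ σ − ‖d‖₂ > 0) and û = (σ·u + d)/σ̂. Then ‖u − û‖₂ ≤ 2‖d‖₂/(σ − ‖d‖₂). -/
/-! Normalizing `v = σ • u + d` moves the unit vector `u` by
`(‖v‖ - σ) • u - d`, up to the factor `‖v‖⁻¹`; both terms have norm at most `‖d‖`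
by the reverse triangle inequality, and `‖v‖ ≥ σ - ‖d‖`. -/

noncomputable def vnorm {n : ℕ} (v : Fin n → ℝ) : ℝ :=
  Real.sqrt (∑ i, (v i) ^ 2)

lemma vnorm_eq_norm_toLp {n : ℕ} (v : Fin n → ℝ) : vnorm v = ‖WithLp.toLp 2 v‖ := by
  simp [vnorm, EuclideanSpace.norm_eq, sq_abs]

section NormedSpace

variable {E : Type*} [NormedAddCommGroup E] [NormedSpace ℝ E]

lemma norm_sub_inv_norm_smul_le {u v : E} (hu : ‖u‖ = 1) (hv : v ≠ 0) {σ : ℝ} (hσ : 0 ≤ σ) :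
    ‖u - ‖v‖⁻¹ • v‖ ≤ 2 * ‖v - σ • u‖ / ‖v‖ := by
  have hv₀ : 0 < ‖v‖ := norm_pos_iff.mpr hv
  have hσu : ‖σ • u‖ = σ := by rw [norm_smul, hu, Real.norm_of_nonneg hσ, mul_one]
  have hdiff : u - ‖v‖⁻¹ • v = ‖v‖⁻¹ • ((‖v‖ - σ) • u - (v - σ • u)) := by
    match_scalars <;> field_simp
    ring
  have hscale : |‖v‖ - σ| ≤ ‖v - σ • u‖ := by
    simpa only [hσu] using abs_norm_sub_norm_le v (σ • u)
  calc ‖u - ‖v‖⁻¹ • v‖ = ‖(‖v‖ - σ) • u - (v - σ • u)‖ / ‖v‖ := by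
        rw [hdiff, norm_smul, norm_inv, norm_norm, inv_mul_eq_div]
    _ ≤ (|‖v‖ - σ| + ‖v - σ • u‖) / ‖v‖ := by
        gcongr
        simpa [norm_smul, hu] using norm_sub_le ((‖v‖ - σ) • u) (v - σ • u)
    _ ≤ 2 * ‖v - σ • u‖ / ‖v‖ := by gcongr; linarith

lemma norm_sub_normalize_smul_add_le {u d : E} (hu : ‖u‖ = 1) {σ : ℝ} (hd : ‖d‖ < σ) :
    ‖u - ‖σ • u + d‖⁻¹ • (σ • u + d)‖ ≤ 2 * ‖d‖ / (σ - ‖d‖) := by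
  have hσ : 0 ≤ σ := (norm_nonneg d).trans hd.le
  have hlower : σ - ‖d‖ ≤ ‖σ • u + d‖ := by
    simpa [norm_smul, hu, abs_of_nonneg hσ] using norm_sub_norm_le (σ • u) (-d)
  have hpos : 0 < ‖σ • u + d‖ := by linarith
  calc ‖u - ‖σ • u + d‖⁻¹ • (σ • u + d)‖
      ≤ 2 * ‖σ • u + d - σ • u‖ / ‖σ • u + d‖ :=
        norm_sub_inv_norm_smul_le hu (norm_pos_iff.mp hpos) hσ
    _ ≤ 2 * ‖d‖ / (σ - ‖d‖) := by
        rw [add_sub_cancel_left]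
        gcongr

end NormedSpace

theorem swicca_singular_vector_perturbation_general {w : ℕ}
    (u d : Fin w → ℝ) (hu : vnorm u = 1) (σ : ℝ)
    (hd : vnorm d < σ) :
    vnorm (u - (vnorm (σ • u + d))⁻¹ • (σ • u + d)) ≤
      2 * vnorm d / (σ - vnorm d) := by
  simp only [vnorm_eq_norm_toLp] at hu hd ⊢
  simpa using norm_sub_normalize_smul_add_le hu hd

/-- Per-column singular-vector perturbation bound (eq:u_err) for SWICCA:
with `σ̂ = ‖σ·u + d‖₂` and `û = (σ·u + d)/σ̂`, we have
`‖u − û‖₂ ≤ 2‖d‖₂/(σ − ‖d‖₂)`. -/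
theorem swicca_singular_vector_perturbation {w : ℕ} (hw : 1 ≤ w)
    (u d : Fin w → ℝ) (hu : vnorm u = 1) (σ : ℝ) (hσ : 0 < σ)
    (hd : vnorm d < σ) :
    vnorm (u - (vnorm (σ • u + d))⁻¹ • (σ • u + d)) ≤
      2 * vnorm d / (σ - vnorm d) :=
  swicca_singular_vector_perturbation_general u d hu σ hd
end

section
/- Let U ∈ ℝ^{w×r} have orthonormal columns u₁, …, u_r, let σ₁, …, σ_r > 0, and let E ∈ ℝ^{w×r} have columns e₁, …, e_r with ‖e_i‖₂ < σ_i for every i. Define σ̂_i = ‖σ_i·u_i + e_i‖₂ > 0 and let Û ∈ ℝ^{w×r} be the matrix whose i-th column is û_i = (σ_i·u_i + e_i)/σ̂_i. Then ‖Û − U‖_F ≤ 2‖E‖_F / min_{1≤i≤r} (σ_i − ‖e_i‖₂). -/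
open Matrix

/-- Frobenius norm of a real matrix. -/
noncomputable def frob {m n : ℕ} (M : Matrix (Fin m) (Fin n) ℝ) : ℝ :=
  Real.sqrt (∑ i, ∑ j, (M i j) ^ 2)

/-!
Write `v = σ • u + e` with `‖u‖ = 1`. Then `v / ‖v‖ - u = (e + (σ - ‖v‖) • u) / ‖v‖`, and the
triangle inequality gives both `|σ - ‖v‖| ≤ ‖e‖` and `‖v‖ ≥ σ - ‖e‖`, so each normalized column
is within `2 ‖e_i‖ / (σ_i - ‖e_i‖)` of `u_i`. Summing the squares of these column bounds over
`i` gives the Frobenius bound.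
-/

theorem norm_inv_norm_smul_add_sub_le {V : Type*} [NormedAddCommGroup V] [NormedSpace ℝ V]
    {u e : V} {σ : ℝ} (hu : ‖u‖ = 1) (he : ‖e‖ < σ) :
    ‖‖σ • u + e‖⁻¹ • (σ • u + e) - u‖ ≤ 2 * ‖e‖ / (σ - ‖e‖) := by
  set v := σ • u + e
  have hσu : ‖σ • u‖ = σ := by
    rw [norm_smul, hu, mul_one, Real.norm_of_nonneg ((norm_nonneg e).trans he.le)]
  have hv : σ - ‖e‖ ≤ ‖v‖ := by
    simpa [hσu] using norm_sub_norm_le (σ • u) (-e)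
  have hv_pos : 0 < ‖v‖ := (sub_pos.mpr he).trans_le hv
  have hgap : ‖(σ - ‖v‖) • u‖ ≤ ‖e‖ := by
    rw [norm_smul, hu, mul_one, Real.norm_eq_abs, ← hσu]
    simpa [v] using abs_norm_sub_norm_le (σ • u) v
  have hdecomp : ‖v‖⁻¹ • v - u = ‖v‖⁻¹ • (e + (σ - ‖v‖) • u) := by
    have : v - ‖v‖ • u = e + (σ - ‖v‖) • u := by simp only [v, sub_smul]; abel
    rw [← this, smul_sub, smul_smul, inv_mul_cancel₀ hv_pos.ne', one_smul]
  calc ‖‖v‖⁻¹ • v - u‖ = ‖e + (σ - ‖v‖) • u‖ / ‖v‖ := by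
        rw [hdecomp, norm_smul, norm_inv, norm_norm, inv_mul_eq_div]
    _ ≤ 2 * ‖e‖ / ‖v‖ := by gcongr; linarith [norm_add_le e ((σ - ‖v‖) • u)]
    _ ≤ 2 * ‖e‖ / (σ - ‖e‖) := by gcongr

theorem vnorm_eq_norm {n : ℕ} (x : EuclideanSpace ℝ (Fin n)) : vnorm x.ofLp = ‖x‖ := by
  simp only [vnorm, EuclideanSpace.norm_eq, Real.norm_eq_abs, sq_abs]

theorem vnorm_col_eq_one {w r : ℕ} {U : Matrix (Fin w) (Fin r) ℝ} (hU : Uᵀ * U = 1) (j : Fin r) :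
    vnorm (fun k => U k j) = 1 := by
  have hsum : ∑ k, U k j ^ 2 = 1 := by
    simpa [Matrix.mul_apply, sq] using congrFun (congrFun hU j) j
  rw [vnorm, hsum, Real.sqrt_one]

theorem frob_le_of_vnorm_col_le {m n : ℕ} {M N : Matrix (Fin m) (Fin n) ℝ} {c : ℝ} (hc : 0 ≤ c)
    (h : ∀ j, vnorm (fun i => M i j) ≤ c * vnorm (fun i => N i j)) :
    frob M ≤ c * frob N := by
  have hcols (A : Matrix (Fin m) (Fin n) ℝ) :
      ∑ i, ∑ j, A i j ^ 2 = ∑ j, vnorm (fun i => A i j) ^ 2 := by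
    rw [Finset.sum_comm]
    exact Finset.sum_congr rfl fun j _ => (Real.sq_sqrt (by positivity)).symm
  rw [frob, frob, hcols, hcols, ← Real.sqrt_sq hc, ← Real.sqrt_mul (sq_nonneg c), Finset.mul_sum]
  gcongr with j
  rw [← mul_pow]
  exact pow_le_pow_left₀ (Real.sqrt_nonneg _) (h j) 2

theorem vnorm_div_vnorm_smul_add_sub_le {w : ℕ} {u e : Fin w → ℝ} {σ : ℝ} (hu : vnorm u = 1)
    (he : vnorm e < σ) :
    vnorm (fun k => (σ * u k + e k) / vnorm (fun j => σ * u j + e j) - u k) ≤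
      2 * vnorm e / (σ - vnorm e) := by
  let u' : EuclideanSpace ℝ (Fin w) := WithLp.toLp 2 u
  let e' : EuclideanSpace ℝ (Fin w) := WithLp.toLp 2 e
  have hvec : (fun k => (σ * u k + e k) / vnorm (fun j => σ * u j + e j) - u k) =
      (‖σ • u' + e'‖⁻¹ • (σ • u' + e') - u').ofLp := by
    ext k
    rw [← vnorm_eq_norm, div_eq_inv_mul]
    rfl
  have hu' : vnorm u = ‖u'‖ := vnorm_eq_norm u'
  have he' : vnorm e = ‖e'‖ := vnorm_eq_norm e'
  rw [hvec, vnorm_eq_norm, he']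
  exact norm_inv_norm_smul_add_sub_le (hu'.symm.trans hu) (he'.symm.trans_lt he)

theorem swicca_singular_vector_matrix_bound_general {w r : ℕ}
    (U E : Matrix (Fin w) (Fin r) ℝ) (hU : Uᵀ * U = 1)
    (σ : Fin r → ℝ)
    (hE : ∀ i, vnorm (fun k => E k i) < σ i) :
    frob ((Matrix.of fun k i =>
        (σ i * U k i + E k i) / vnorm (fun j => σ i * U j i + E j i)) - U) ≤
      2 * frob E / ⨅ i, (σ i - vnorm (fun k => E k i)) := by
  set m := ⨅ i, (σ i - vnorm (fun k => E k i))
  have hm : 0 ≤ m := Real.iInf_nonneg fun i => (sub_pos.mpr (hE i)).le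
  rw [mul_div_right_comm]
  refine frob_le_of_vnorm_col_le (by positivity) fun j => ?_
  -- An empty `⨅` over reals is `0`; `m > 0` holds only once a column `j` exists.
  have : Nonempty (Fin r) := ⟨j⟩
  obtain ⟨i, hi⟩ := exists_eq_ciInf_of_finite (f := fun i => σ i - vnorm (fun k => E k i))
  have hm_pos : 0 < m := (sub_pos.mpr (hE i)).trans_eq hi
  have hmj : m ≤ σ j - vnorm (fun k => E k j) := ciInf_le (Set.finite_range _).bddBelow j
  calc _ ≤ 2 * vnorm (fun k => E k j) / (σ j - vnorm (fun k => E k j)) :=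
        vnorm_div_vnorm_smul_add_sub_le (vnorm_col_eq_one hU j) (hE j)
    _ ≤ 2 * vnorm (fun k => E k j) / m := by
        gcongr
        exact mul_nonneg zero_le_two (Real.sqrt_nonneg _)
    _ = 2 / m * vnorm (fun k => E k j) := by rw [mul_div_right_comm]

/-- Aggregate left singular-vector perturbation bound from the error analysis of
the SWICCA algorithm (Theorem 2): with `σ̂_i = ‖σ_i·u_i + e_i‖₂` and
`û_i = (σ_i·u_i + e_i)/σ̂_i`,
`‖Û − U‖_F ≤ 2‖E‖_F / min_i (σ_i − ‖e_i‖₂)`. -/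
theorem swicca_singular_vector_matrix_bound {w r : ℕ} (hr : 0 < r)
    (U E : Matrix (Fin w) (Fin r) ℝ) (hU : Uᵀ * U = 1)
    (σ : Fin r → ℝ) (hσ : ∀ i, 0 < σ i)
    (hE : ∀ i, vnorm (fun k => E k i) < σ i) :
    frob ((Matrix.of fun k i =>
        (σ i * U k i + E k i) / vnorm (fun j => σ i * U j i + E j i)) - U) ≤
      2 * frob E / ⨅ i, (σ i - vnorm (fun k => E k i)) :=
  swicca_singular_vector_matrix_bound_general U E hU σ hE
end
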